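/- Sharp threshold corollary: if p_ij > 1/2 for all i < j, then the complete graph (all off-diagonal entries 1) minimizes B ↦ Σ_{A∈S} d_H(A,B)^2 Pr(A); if p_ij < 1/2 for all i < j, then the empty graph (the zero matrix) minimizes this functional. -/

import Mathlib

open Finset
open scoped Classical

/-- The set of pairs (i,j) with i < j. -/
def pairs (n : ℕ) : Finset (Fin n × Fin n) :=
  Finset.univ.filter (fun q => q.1 < q.2)

/-- The set `S` of adjacency matrices: symmetric Bool matrices with zero (false) diagonal. -/
noncomputable def adjS (n : ℕ) : Finset (Matrix (Fin n) (Fin n) Bool) :=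
  Finset.univ.filter (fun A => (∀ i j, A i j = A j i) ∧ ∀ i, A i i = false)

/-- The real-valued 0/1 entry of an adjacency matrix. -/
noncomputable def val {n : ℕ} (A : Matrix (Fin n) (Fin n) Bool) (i j : Fin n) : ℝ :=
  if A i j then 1 else 0

/-- The Hamming distance between two graphs. -/
noncomputable def dH {n : ℕ} (A B : Matrix (Fin n) (Fin n) Bool) : ℝ :=
  ∑ q ∈ pairs n, |val A q.1 q.2 - val B q.1 q.2|

/-- The inhomogeneous Erdős–Rényi probability of an adjacency matrix:
`∏_{i<j} p_ij^{a_ij} (1-p_ij)^{1-a_ij}`. -/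
noncomputable def erPr {n : ℕ} (p : Fin n → Fin n → ℝ) (A : Matrix (Fin n) (Fin n) Bool) : ℝ :=
  ∏ q ∈ pairs n, if A q.1 q.2 then p q.1 q.2 else 1 - p q.1 q.2

/-- The edge set of a graph: pairs (i,j), i<j, with b_ij = 1. -/
def edges {n : ℕ} (B : Matrix (Fin n) (Fin n) Bool) : Finset (Fin n × Fin n) :=
  (pairs n).filter (fun q => B q.1 q.2 = true)

/-!
Expanding the square and using the independence of the edges,
`E[d_H(A,B)²] = ∑_{q₀,q₁} ∏_{q ∈ {q₀,q₁}} Pr(a_q ≠ b_q)`, which is increasing in each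
disagreement probability `Pr(a_q ≠ b_q)`, equal to `1 - p_q` if `b_q = 1` and to `p_q` if `b_q = 0`.
If every `p_q > 1/2` the complete graph minimizes all of them at once, and if every `p_q < 1/2`
the empty graph does.
-/

lemma mem_pairs {n : ℕ} {q : Fin n × Fin n} : q ∈ pairs n ↔ q.1 < q.2 := by
  simp [pairs]

noncomputable def adjOfPairs {n : ℕ} (f : pairs n → Bool) : Matrix (Fin n) (Fin n) Bool :=
  Matrix.of fun i j =>
    if h : i < j then f ⟨(i, j), mem_pairs.2 h⟩
    else if h' : j < i then f ⟨(j, i), mem_pairs.2 h'⟩ else false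

lemma adjOfPairs_mem_adjS {n : ℕ} (f : pairs n → Bool) : adjOfPairs f ∈ adjS n := by
  simp only [adjS, mem_filter, mem_univ, true_and]
  refine ⟨fun i j => ?_, fun i => by simp [adjOfPairs]⟩
  rcases lt_trichotomy i j with h | rfl | h
  · simp [adjOfPairs, h, h.not_gt]
  · rfl
  · simp [adjOfPairs, h, h.not_gt]

lemma adjOfPairs_restrict {n : ℕ} {A : Matrix (Fin n) (Fin n) Bool} (hA : A ∈ adjS n) :
    adjOfPairs (fun q : pairs n => A q.1.1 q.1.2) = A := by
  simp only [adjS, mem_filter, mem_univ, true_and] at hA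
  ext i j
  rcases lt_trichotomy i j with h | rfl | h
  · simp [adjOfPairs, h]
  · simp [adjOfPairs, hA.2]
  · simp [adjOfPairs, h, h.not_gt, hA.1 i j]

/-- Graphs in `S` correspond to free choices of their entries on the pairs `i < j`. -/
lemma sum_adjS_prod {n : ℕ} (g : Fin n × Fin n → Bool → ℝ) :
    ∑ A ∈ adjS n, ∏ q ∈ pairs n, g q (A q.1 q.2) = ∏ q ∈ pairs n, (g q true + g q false) := by
  calc ∑ A ∈ adjS n, ∏ q ∈ pairs n, g q (A q.1 q.2)
      = ∑ f : pairs n → Bool, ∏ q : pairs n, g q (f q) := by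
        refine sum_nbij' (fun A q => A q.1.1 q.1.2) adjOfPairs (fun _ _ => mem_univ _)
          (fun f _ => adjOfPairs_mem_adjS f) (fun A hA => adjOfPairs_restrict hA)
          (fun f _ => ?_) (fun A _ => (prod_coe_sort (pairs n) _).symm)
        funext q
        simp [adjOfPairs, mem_pairs.1 q.2]
    _ = ∏ q : pairs n, ∑ b : Bool, g q b := by
        rw [← Fintype.piFinset_univ, prod_univ_sum]
    _ = ∏ q ∈ pairs n, (g q true + g q false) := by
        simp only [Fintype.sum_bool]
        exact prod_coe_sort (pairs n) fun q => g q true + g q false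

lemma sum_prod_mul_erPr {n : ℕ} (p : Fin n → Fin n → ℝ) (f : Fin n × Fin n → Bool → ℝ)
    {s : Finset (Fin n × Fin n)} (hs : s ⊆ pairs n) :
    ∑ A ∈ adjS n, (∏ q ∈ s, f q (A q.1 q.2)) * erPr p A
      = ∏ q ∈ s, (f q true * p q.1 q.2 + f q false * (1 - p q.1 q.2)) := by
  have hprod : ∀ A : Matrix (Fin n) (Fin n) Bool, (∏ q ∈ s, f q (A q.1 q.2)) * erPr p A
      = ∏ q ∈ pairs n, (if q ∈ s then f q (A q.1 q.2) else 1)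
          * (if A q.1 q.2 then p q.1 q.2 else 1 - p q.1 q.2) := by
    intro A
    rw [prod_mul_distrib, prod_ite_mem, inter_eq_right.2 hs, erPr]
  rw [sum_congr rfl fun A _ => hprod A, sum_adjS_prod fun q b =>
    (if q ∈ s then f q b else 1) * (if b then p q.1 q.2 else 1 - p q.1 q.2)]
  calc _ = ∏ q ∈ pairs n,
        if q ∈ s then f q true * p q.1 q.2 + f q false * (1 - p q.1 q.2) else 1 :=
        prod_congr rfl fun q _ => by by_cases hq : q ∈ s <;> simp [hq]
    _ = _ := by rw [prod_ite_mem, inter_eq_right.2 hs]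

noncomputable def mismatch {n : ℕ} (B : Matrix (Fin n) (Fin n) Bool) (q : Fin n × Fin n)
    (b : Bool) : ℝ :=
  if b = B q.1 q.2 then 0 else 1

/-- `Pr(a_q ≠ b_q)` under the Erdős–Rényi measure. -/
noncomputable def mismatchProb {n : ℕ} (p : Fin n → Fin n → ℝ) (B : Matrix (Fin n) (Fin n) Bool)
    (q : Fin n × Fin n) : ℝ :=
  if B q.1 q.2 then 1 - p q.1 q.2 else p q.1 q.2

lemma dH_eq_sum_mismatch {n : ℕ} (A B : Matrix (Fin n) (Fin n) Bool) :
    dH A B = ∑ q ∈ pairs n, mismatch B q (A q.1 q.2) := by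
  refine sum_congr rfl fun q _ => ?_
  cases hA : A q.1 q.2 <;> cases hB : B q.1 q.2 <;> simp [_root_.val, mismatch, hA, hB]

lemma mismatch_mul_mismatch {n : ℕ} (A B : Matrix (Fin n) (Fin n) Bool) (q₀ q₁ : Fin n × Fin n) :
    mismatch B q₀ (A q₀.1 q₀.2) * mismatch B q₁ (A q₁.1 q₁.2)
      = ∏ q ∈ {q₀, q₁}, mismatch B q (A q.1 q.2) := by
  by_cases h : q₀ = q₁
  · subst h
    simp only [insert_eq_of_mem (mem_singleton_self q₀), prod_singleton, mismatch]
    split_ifs <;> norm_num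
  · rw [prod_pair h]

lemma mismatch_expectation {n : ℕ} (p : Fin n → Fin n → ℝ) (B : Matrix (Fin n) (Fin n) Bool)
    (q : Fin n × Fin n) :
    mismatch B q true * p q.1 q.2 + mismatch B q false * (1 - p q.1 q.2) = mismatchProb p B q := by
  cases h : B q.1 q.2 <;> simp [mismatch, mismatchProb, h]

lemma sum_sq_dH_mul_erPr {n : ℕ} (p : Fin n → Fin n → ℝ) (B : Matrix (Fin n) (Fin n) Bool) :
    ∑ A ∈ adjS n, dH A B ^ 2 * erPr p A
      = ∑ q₀ ∈ pairs n, ∑ q₁ ∈ pairs n, ∏ q ∈ {q₀, q₁}, mismatchProb p B q := by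
  simp_rw [dH_eq_sum_mismatch, sq, sum_mul_sum, sum_mul]
  rw [sum_comm]
  refine sum_congr rfl fun q₀ h₀ => ?_
  rw [sum_comm]
  refine sum_congr rfl fun q₁ h₁ => ?_
  simp_rw [mismatch_mul_mismatch]
  rw [sum_prod_mul_erPr p _ (insert_subset h₀ (singleton_subset_iff.2 h₁))]
  simp_rw [mismatch_expectation]

lemma sum_sq_dH_mul_erPr_le {n : ℕ} (p : Fin n → Fin n → ℝ) {B C : Matrix (Fin n) (Fin n) Bool}
    (h : ∀ q ∈ pairs n, 0 ≤ mismatchProb p C q ∧ mismatchProb p C q ≤ mismatchProb p B q) :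
    ∑ A ∈ adjS n, dH A C ^ 2 * erPr p A ≤ ∑ A ∈ adjS n, dH A B ^ 2 * erPr p A := by
  rw [sum_sq_dH_mul_erPr, sum_sq_dH_mul_erPr]
  refine sum_le_sum fun q₀ h₀ => sum_le_sum fun q₁ h₁ => ?_
  have hsub : ({q₀, q₁} : Finset _) ⊆ pairs n := insert_subset h₀ (singleton_subset_iff.2 h₁)
  exact prod_le_prod (fun q hq => (h q (hsub hq)).1) (fun q hq => (h q (hsub hq)).2)

theorem stmt9_general (n : ℕ) (p : Fin n → Fin n → ℝ)
    (hp : ∀ i j, 0 ≤ p i j ∧ p i j ≤ 1) :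
    ((∀ i j : Fin n, i < j → 1 / 2 < p i j) →
      ∀ B ∈ adjS n,
        ∑ A ∈ adjS n, (dH A (Matrix.of fun i j => decide (i ≠ j))) ^ 2 * erPr p A ≤
          ∑ A ∈ adjS n, (dH A B) ^ 2 * erPr p A) ∧
    ((∀ i j : Fin n, i < j → p i j < 1 / 2) →
      ∀ B ∈ adjS n,
        ∑ A ∈ adjS n, (dH A (Matrix.of fun _ _ => false)) ^ 2 * erPr p A ≤
          ∑ A ∈ adjS n, (dH A B) ^ 2 * erPr p A) := by
  constructor
  · refine fun hhalf B _ => sum_sq_dH_mul_erPr_le p fun q hq => ?_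
    have hlt := mem_pairs.1 hq
    have hpq := hhalf q.1 q.2 hlt
    have hC : mismatchProb p (Matrix.of fun i j => decide (i ≠ j)) q = 1 - p q.1 q.2 := by
      simp [mismatchProb, hlt.ne]
    rw [hC, mismatchProb]
    split_ifs <;> constructor <;> linarith [hp q.1 q.2]
  · refine fun hhalf B _ => sum_sq_dH_mul_erPr_le p fun q hq => ?_
    have hpq := hhalf q.1 q.2 (mem_pairs.1 hq)
    have hC : mismatchProb p (Matrix.of fun _ _ => false) q = p q.1 q.2 := by
      simp [mismatchProb]
    rw [hC, mismatchProb]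
    split_ifs <;> constructor <;> linarith [hp q.1 q.2]

theorem stmt9 (n : ℕ) (p : Fin n → Fin n → ℝ)
    (hp : ∀ i j, 0 ≤ p i j ∧ p i j ≤ 1) (hsym : ∀ i j, p i j = p j i)
    (hdiag : ∀ i, p i i = 0) :
    ((∀ i j : Fin n, i < j → 1 / 2 < p i j) →
      ∀ B ∈ adjS n,
        ∑ A ∈ adjS n, (dH A (Matrix.of fun i j => decide (i ≠ j))) ^ 2 * erPr p A ≤
          ∑ A ∈ adjS n, (dH A B) ^ 2 * erPr p A) ∧
    ((∀ i j : Fin n, i < j → p i j < 1 / 2) →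
      ∀ B ∈ adjS n,
        ∑ A ∈ adjS n, (dH A (Matrix.of fun _ _ => false)) ^ 2 * erPr p A ≤
          ∑ A ∈ adjS n, (dH A B) ^ 2 * erPr p A) :=
  stmt9_general n p hp
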